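/- arXiv:2002.06597 — 3 statements merged into one kernel-verified Lean document; each statement's English description precedes it below -/
import Mathlib

section
/- An arrangement of n hyperplanes in R^m partitions the complement of their union into at most sum_{j=0}^{m} C(n, j) connected regions. -/
/-!
Sort the points of the complement by their sign vector with respect to the `n` affine
functionals. Each sign cell is an intersection of open half-spaces, hence convex and connected,
so there are at most as many regions as realizable sign vectors. These are counted by induction
on `n`: deleting the hyperplane `H = {f₀ = 0}` identifies exactly those pairs of sign vectors that
differ only in the sign of `f₀`, and such a pair is realized on both sides of `H`, so by
convexity its common restriction is realized on `H` itself, an arrangement of `n - 1`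
hyperplanes in dimension at most `m - 1`. Pascal's rule closes the induction.
-/

open Matrix

open Finset in
theorem sum_range_choose_succ (n d : ℕ) :
    ∑ j ∈ range (d + 1), (n + 1).choose j =
      ∑ j ∈ range (d + 1), n.choose j + ∑ j ∈ range d, n.choose j := by
  induction d with
  | zero => simp
  | succ d ih =>
    rw [sum_range_succ, ih, sum_range_succ _ (d + 1), sum_range_succ _ d, Nat.choose_succ_succ']
    ring

theorem ncard_le_ncard_image_tail_add {n : ℕ} (S : Set (Fin (n + 1) → Bool)) :
    S.ncard ≤ (Fin.tail '' S).ncard +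
      {τ | Fin.cons true τ ∈ S ∧ Fin.cons false τ ∈ S}.ncard := by
  set half : Bool → Set (Fin (n + 1) → Bool) := fun s => {σ ∈ S | σ 0 = s}
  have hS : S = half true ∪ half false := by
    ext σ; cases h : σ 0 <;> simp [half, h]
  have hdisj : Disjoint (half true) (half false) :=
    Set.disjoint_left.mpr fun σ h₁ h₂ => Bool.noConfusion (h₁.2.symm.trans h₂.2)
  have hinj (s : Bool) : Set.InjOn Fin.tail (half s) := fun σ hσ σ' hσ' h => by
    rw [← Fin.cons_self_tail σ, ← Fin.cons_self_tail σ', hσ.2, hσ'.2, h]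
  have hinter : Fin.tail '' half true ∩ Fin.tail '' half false ⊆
      {τ | Fin.cons true τ ∈ S ∧ Fin.cons false τ ∈ S} := by
    rintro τ ⟨⟨σ, ⟨hσ, hσ0⟩, rfl⟩, ⟨σ', ⟨hσ', hσ'0⟩, h⟩⟩
    refine ⟨by rwa [← hσ0, Fin.cons_self_tail], ?_⟩
    rwa [← h, ← hσ'0, Fin.cons_self_tail]
  calc S.ncard = (half true).ncard + (half false).ncard := by
        rw [hS]; exact Set.ncard_union_eq hdisj
    _ = (Fin.tail '' half true).ncard + (Fin.tail '' half false).ncard := by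
        rw [(hinj true).ncard_image, (hinj false).ncard_image]
    _ = (Fin.tail '' half true ∪ Fin.tail '' half false).ncard +
          (Fin.tail '' half true ∩ Fin.tail '' half false).ncard :=
        (Set.ncard_union_add_ncard_inter _ _).symm
    _ ≤ _ := by
        rw [← Set.image_union, ← hS]
        exact Nat.add_le_add_left (Set.ncard_le_ncard hinter) _

theorem Convex.exists_mem_eq_zero_of_pos_of_neg {V : Type*} [AddCommGroup V] [Module ℝ V]
    {s : Set V} (hs : Convex ℝ s) (g : V →ᵃ[ℝ] ℝ) {x y : V} (hx : x ∈ s) (hy : y ∈ s)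
    (hgx : 0 < g x) (hgy : g y < 0) : ∃ z ∈ s, g z = 0 := by
  have hden : 0 < g x - g y := by linarith
  refine ⟨AffineMap.lineMap x y (g x / (g x - g y)), hs.lineMap_mem hx hy
    ⟨by positivity, (div_le_one hden).mpr (by linarith)⟩, ?_⟩
  rw [AffineMap.apply_lineMap, AffineMap.lineMap_apply_ring']
  field_simp
  ring

theorem AffineMap.exists_zero_set_subset_range {V : Type*} [AddCommGroup V] [Module ℝ V]
    (g : V →ᵃ[ℝ] ℝ) (hg : g.linear ≠ 0) :
    ∃ φ : LinearMap.ker g.linear →ᵃ[ℝ] V, {z | g z = 0} ⊆ Set.range φ := by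
  obtain ⟨x₀, hx₀⟩ := LinearMap.surjective hg (-g 0)
  refine ⟨(LinearMap.ker g.linear).subtype.toAffineMap + AffineMap.const ℝ _ x₀, ?_⟩
  intro z hz
  have hker : z - x₀ ∈ LinearMap.ker g.linear := by
    have := g.linearMap_vsub z 0
    simp_all
  exact ⟨⟨z - x₀, hker⟩, by simp⟩

section SignCell

open Set

variable {ι V : Type*} [AddCommGroup V] [Module ℝ V]

def signCell (f : ι → V →ᵃ[ℝ] ℝ) (σ : ι → Bool) : Set V :=
  ⋂ i, f i ⁻¹' cond (σ i) (Ioi 0) (Iio 0)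

def realizedSigns (f : ι → V →ᵃ[ℝ] ℝ) : Set (ι → Bool) :=
  {σ | (signCell f σ).Nonempty}

theorem convex_signCell (f : ι → V →ᵃ[ℝ] ℝ) (σ : ι → Bool) : Convex ℝ (signCell f σ) :=
  convex_iInter fun i => by
    cases σ i
    exacts [(convex_Iio 0).affine_preimage _, (convex_Ioi 0).affine_preimage _]

theorem signCell_subset (f : ι → V →ᵃ[ℝ] ℝ) (σ : ι → Bool) :
    signCell f σ ⊆ {x | ∀ i, f i x ≠ 0} := fun x hx i => by
  have := mem_iInter.mp hx i
  cases h : σ i <;> simp only [h, cond_false, cond_true, mem_preimage, mem_Iio, mem_Ioi] at this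
  exacts [this.ne, this.ne']

theorem mem_signCell_iff {f : ι → V →ᵃ[ℝ] ℝ} {x : V} (hx : ∀ i, f i x ≠ 0) {σ : ι → Bool} :
    x ∈ signCell f σ ↔ (fun i => decide (0 < f i x)) = σ := by
  simp only [signCell, mem_iInter, mem_preimage, funext_iff]
  refine forall_congr' fun i => ?_
  cases σ i <;> simp [(hx i).le_iff_lt]

theorem signCell_comp {W : Type*} [AddCommGroup W] [Module ℝ W] (f : ι → V →ᵃ[ℝ] ℝ)
    (φ : W →ᵃ[ℝ] V) (σ : ι → Bool) :
    signCell (fun i => (f i).comp φ) σ = φ ⁻¹' signCell f σ := by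
  ext; simp [signCell]

theorem mem_signCell_cons {n : ℕ} {f : Fin (n + 1) → V →ᵃ[ℝ] ℝ} {s : Bool} {τ : Fin n → Bool}
    {x : V} :
    x ∈ signCell f (Fin.cons s τ) ↔
      f 0 x ∈ cond s (Ioi 0) (Iio 0) ∧ x ∈ signCell (Fin.tail f) τ := by
  simp [signCell, Fin.forall_fin_succ, Fin.tail]

theorem image_tail_realizedSigns_subset {n : ℕ} (f : Fin (n + 1) → V →ᵃ[ℝ] ℝ) :
    Fin.tail '' realizedSigns f ⊆ realizedSigns (Fin.tail f) := by
  rintro _ ⟨σ, ⟨x, hx⟩, rfl⟩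
  rw [← Fin.cons_self_tail σ, mem_signCell_cons] at hx
  exact ⟨x, hx.2⟩

theorem cons_mem_realizedSigns_iff {n : ℕ} {f : Fin (n + 1) → V →ᵃ[ℝ] ℝ} {τ : Fin n → Bool} :
    Fin.cons true τ ∈ realizedSigns f ∧ Fin.cons false τ ∈ realizedSigns f ↔
      ∃ x ∈ signCell (Fin.tail f) τ, ∃ y ∈ signCell (Fin.tail f) τ, 0 < f 0 x ∧ f 0 y < 0 := by
  simp only [realizedSigns, Set.Nonempty, mem_ofPred_eq, mem_signCell_cons, cond_true, cond_false,
    mem_Ioi, mem_Iio]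
  constructor
  · rintro ⟨⟨x, hx, hxτ⟩, ⟨y, hy, hyτ⟩⟩
    exact ⟨x, hxτ, y, hyτ, hx, hy⟩
  · rintro ⟨x, hxτ, y, hyτ, hx, hy⟩
    exact ⟨⟨x, hx, hxτ⟩, ⟨y, hy, hyτ⟩⟩

theorem doubled_realizedSigns_eq_empty {n : ℕ} {f : Fin (n + 1) → V →ᵃ[ℝ] ℝ}
    (hf : (f 0).linear = 0) :
    {τ | Fin.cons true τ ∈ realizedSigns f ∧ Fin.cons false τ ∈ realizedSigns f} = ∅ := by
  have hconst (x y : V) : f 0 x = f 0 y := by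
    have := (f 0).linearMap_vsub x y
    rwa [hf, LinearMap.zero_apply, vsub_eq_sub, eq_comm, sub_eq_zero] at this
  refine eq_empty_of_forall_notMem fun τ hτ => ?_
  obtain ⟨x, -, y, -, hx, hy⟩ := cons_mem_realizedSigns_iff.mp hτ
  linarith [hconst x y]

theorem doubled_realizedSigns_subset {n : ℕ} {W : Type*} [AddCommGroup W] [Module ℝ W]
    (f : Fin (n + 1) → V →ᵃ[ℝ] ℝ) (φ : W →ᵃ[ℝ] V) (hφ : {z | f 0 z = 0} ⊆ range φ) :
    {τ | Fin.cons true τ ∈ realizedSigns f ∧ Fin.cons false τ ∈ realizedSigns f} ⊆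
      realizedSigns fun i => (Fin.tail f i).comp φ := by
  intro τ hτ
  obtain ⟨x, hx, y, hy, hfx, hfy⟩ := cons_mem_realizedSigns_iff.mp hτ
  obtain ⟨z, hz, hfz⟩ := (convex_signCell _ τ).exists_mem_eq_zero_of_pos_of_neg _ hx hy hfx hfy
  obtain ⟨w, rfl⟩ := hφ hfz
  exact ⟨w, by rwa [signCell_comp]⟩

end SignCell

open Finset in
theorem ncard_realizedSigns_le (n : ℕ) :
    ∀ {V : Type*} [AddCommGroup V] [Module ℝ V] [FiniteDimensional ℝ V] (d : ℕ),
      Module.finrank ℝ V ≤ d → ∀ f : Fin n → V →ᵃ[ℝ] ℝ,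
        (realizedSigns f).ncard ≤ ∑ j ∈ range (d + 1), n.choose j := by
  induction n with
  | zero =>
    intro V _ _ _ d _ f
    exact (Set.ncard_le_one_of_subsingleton _).trans (by simp [sum_range_succ'])
  | succ n ih =>
    intro V _ _ _ d hd f
    have hdoubled : {τ | Fin.cons true τ ∈ realizedSigns f ∧
        Fin.cons false τ ∈ realizedSigns f}.ncard ≤ ∑ j ∈ range d, n.choose j := by
      rcases eq_or_ne (f 0).linear 0 with hf | hf
      · simp [doubled_realizedSigns_eq_empty hf]
      · have hker := Module.Dual.finrank_ker_add_one_of_ne_zero hf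
        obtain ⟨d, rfl⟩ : ∃ d', d = d' + 1 := ⟨d - 1, by omega⟩
        obtain ⟨φ, hφ⟩ := (f 0).exists_zero_set_subset_range hf
        exact (Set.ncard_le_ncard (doubled_realizedSigns_subset f φ hφ)).trans
          (ih d (by omega) _)
    calc (realizedSigns f).ncard
        ≤ (Fin.tail '' realizedSigns f).ncard +
            {τ | Fin.cons true τ ∈ realizedSigns f ∧ Fin.cons false τ ∈ realizedSigns f}.ncard :=
          ncard_le_ncard_image_tail_add _
      _ ≤ ∑ j ∈ range (d + 1), n.choose j + ∑ j ∈ range d, n.choose j :=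
          add_le_add ((Set.ncard_le_ncard (image_tail_realizedSigns_subset f)).trans
            (ih d hd _)) hdoubled
      _ = ∑ j ∈ range (d + 1), (n + 1).choose j := (sum_range_choose_succ n d).symm

theorem natCard_connectedComponents_le_of_isPreconnected_fiber {X β : Type*}
    [TopologicalSpace X] (s : X → β) [Finite (Set.range s)]
    (hs : ∀ b, IsPreconnected (s ⁻¹' {b})) :
    Nat.card (ConnectedComponents X) ≤ Nat.card (Set.range s) := by
  refine Nat.card_le_card_of_surjective (fun b => ConnectedComponents.mk b.2.choose) ?_
  intro C
  obtain ⟨x, rfl⟩ := ConnectedComponents.surjective_coe C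
  let b : Set.range s := ⟨s x, x, rfl⟩
  exact ⟨b, ConnectedComponents.coe_eq_coe'.mpr
    ((hs (s x)).subset_connectedComponent rfl b.2.choose_spec)⟩

open Finset in
theorem natCard_connectedComponents_compl_zeros_le {V : Type*} [AddCommGroup V] [Module ℝ V]
    [FiniteDimensional ℝ V] [TopologicalSpace V] [IsTopologicalAddGroup V]
    [ContinuousSMul ℝ V] {n : ℕ} (f : Fin n → V →ᵃ[ℝ] ℝ) {d : ℕ}
    (hd : Module.finrank ℝ V ≤ d) :
    Nat.card (ConnectedComponents {x | ∀ i, f i x ≠ 0}) ≤ ∑ j ∈ range (d + 1), n.choose j := by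
  let sign (x : {x | ∀ i, f i x ≠ 0}) : Fin n → Bool := fun i => decide (0 < f i x)
  have hfiber (σ : Fin n → Bool) : sign ⁻¹' {σ} = Subtype.val ⁻¹' signCell f σ := by
    ext x
    exact (mem_signCell_iff x.2).symm
  have hrange : Set.range sign ⊆ realizedSigns f := by
    rintro _ ⟨x, rfl⟩
    exact ⟨x, (mem_signCell_iff x.2).mpr rfl⟩
  calc Nat.card (ConnectedComponents {x | ∀ i, f i x ≠ 0})
      ≤ Nat.card (Set.range sign) :=
        natCard_connectedComponents_le_of_isPreconnected_fiber sign fun σ => by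
          rw [hfiber, ← Topology.IsInducing.subtypeVal.isPreconnected_image,
            Subtype.image_preimage_coe, Set.inter_eq_self_of_subset_right (signCell_subset f σ)]
          exact (convex_signCell f σ).isPreconnected
    _ ≤ (realizedSigns f).ncard := by
        rw [Nat.card_coe_set_eq]
        exact Set.ncard_le_ncard hrange
    _ ≤ ∑ j ∈ range (d + 1), n.choose j := ncard_realizedSigns_le n d hd f

theorem hyperplane_arrangement_region_bound_general (m n : ℕ)
    (a : Fin n → (Fin m → ℝ)) (b : Fin n → ℝ) :
    Nat.card (ConnectedComponents {x : Fin m → ℝ | ∀ i, a i ⬝ᵥ x ≠ b i}) ≤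
      ∑ j ∈ Finset.range (m + 1), n.choose j := by
  let f (i : Fin n) : (Fin m → ℝ) →ᵃ[ℝ] ℝ :=
    (dotProductBilin ℝ ℝ (a i)).toAffineMap - AffineMap.const ℝ _ (b i)
  have hregion : {x : Fin m → ℝ | ∀ i, a i ⬝ᵥ x ≠ b i} = {x | ∀ i, f i x ≠ 0} := by
    ext x
    simp [f, sub_ne_zero]
  rw [hregion]
  exact natCard_connectedComponents_compl_zeros_le f (Module.finrank_fin_fun ℝ).le

/-- **Zaslavsky's bound.** An arrangement of `n` hyperplanes in `ℝ^m` partitions the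
complement of their union into at most `∑_{j=0}^{m} C(n, j)` connected regions. -/
theorem hyperplane_arrangement_region_bound (m n : ℕ)
    (a : Fin n → (Fin m → ℝ)) (b : Fin n → ℝ) (ha : ∀ i, a i ≠ 0) :
    Nat.card (ConnectedComponents {x : Fin m → ℝ | ∀ i, a i ⬝ᵥ x ≠ b i}) ≤
      ∑ j ∈ Finset.range (m + 1), n.choose j :=
  hyperplane_arrangement_region_bound_general m n a b
end

section
/- An arrangement of n hyperplanes through the origin in R^m (n ≥ m ≥ 1, hyperplanes in general position) partitions R^m minus their union into at most 2·sum_{j=0}^{m-1} C(n-1, j) regions. -/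
/-!
Points off the hyperplanes with the same sign vector lie in a common convex cell, so the number
of regions is at most the number of sign vectors realised off the hyperplanes. Deleting the last
hyperplane `H`, a sign vector of the smaller arrangement extends in at most two ways, and in two
ways only if its cell crosses `H`, i.e. only if it is realised by the arrangement restricted to
`H`. Hence `r(n, m) ≤ r(n - 1, m) + r(n - 1, m - 1)`, which is Pascal's recursion for
`2 ∑_{j<m} C(n-1, j)`.
-/

open Finset Module

theorem Set.ncard_le_ncard_image_init_add {α : Type*} [Finite α] {n : ℕ}
    (S : Set (Fin (n + 1) → α)) {a b : α}
    (hS : ∀ σ ∈ S, σ (Fin.last n) = a ∨ σ (Fin.last n) = b) :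
    S.ncard ≤ (Fin.init '' S).ncard +
      ((fun τ : Fin n → α ↦ Fin.snoc τ a) ⁻¹' S ∩ (fun τ ↦ Fin.snoc τ b) ⁻¹' S).ncard := by
  set A := (fun τ : Fin n → α ↦ Fin.snoc τ a) ⁻¹' S
  set B := (fun τ : Fin n → α ↦ Fin.snoc τ b) ⁻¹' S
  have hsplit : S ⊆ (fun τ ↦ Fin.snoc τ a) '' A ∪ (fun τ ↦ Fin.snoc τ b) '' B := by
    intro σ hσ
    rcases hS σ hσ with h | h
    · exact .inl ⟨Fin.init σ, by simpa [A, ← h] using hσ, by simp [← h]⟩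
    · exact .inr ⟨Fin.init σ, by simpa [B, ← h] using hσ, by simp [← h]⟩
  have hunion : A ∪ B ⊆ Fin.init '' S := by
    rintro τ (h | h) <;> exact ⟨_, h, Fin.init_snoc _ _⟩
  calc S.ncard ≤ ((fun τ ↦ Fin.snoc τ a) '' A ∪ (fun τ ↦ Fin.snoc τ b) '' B).ncard :=
        Set.ncard_le_ncard hsplit
    _ ≤ A.ncard + B.ncard :=
        (Set.ncard_union_le _ _).trans (add_le_add Set.ncard_image_le Set.ncard_image_le)
    _ = (A ∪ B).ncard + (A ∩ B).ncard := (Set.ncard_union_add_ncard_inter _ _).symm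
    _ ≤ (Fin.init '' S).ncard + (A ∩ B).ncard := by grw [Set.ncard_le_ncard hunion]

theorem Nat.sum_range_succ_choose_succ (n k : ℕ) :
    ∑ j ∈ range (k + 1), (n + 1).choose j =
      ∑ j ∈ range (k + 1), n.choose j + ∑ j ∈ range k, n.choose j := by
  rw [sum_range_succ', sum_range_succ' (fun j ↦ n.choose j)]
  simp only [Nat.choose_succ_succ', sum_add_distrib, Nat.choose_zero_right]
  ring

theorem sign_mul_add_mul_of_sign_eq {R : Type*} [Ring R] [LinearOrder R]
    [IsStrictOrderedRing R] {a b u v : R} (ha : 0 ≤ a) (hb : 0 ≤ b) (hab : 0 < a + b)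
    (h : SignType.sign u = SignType.sign v) : SignType.sign (a * u + b * v) = SignType.sign u := by
  have key : ∀ {u v : R}, 0 < u → 0 < v → 0 < a * u + b * v := fun hu hv ↦ by
    rcases ha.eq_or_lt with rfl | ha
    · simpa using mul_pos (by simpa using hab) hv
    · exact add_pos_of_pos_of_nonneg (mul_pos ha hu) (mul_nonneg hb hv.le)
  rcases lt_trichotomy u 0 with hu | rfl | hu
  · have hv : v < 0 := by rwa [sign_neg hu, eq_comm, sign_eq_neg_one_iff] at h
    have := key (neg_pos.2 hu) (neg_pos.2 hv)
    rw [mul_neg, mul_neg, ← neg_add, neg_pos] at this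
    rw [sign_neg hu, sign_neg this]
  · rw [sign_zero, eq_comm, sign_eq_zero_iff] at h
    simp [h]
  · have hv : 0 < v := by rwa [sign_pos hu, eq_comm, sign_eq_one_iff] at h
    rw [sign_pos hu, sign_pos (key hu hv)]

section Arrangement

variable {𝕜 V ι : Type*} [Field 𝕜] [LinearOrder 𝕜] [AddCommGroup V] [Module 𝕜 V]

noncomputable def signVector (φ : ι → Dual 𝕜 V) (x : V) : ι → SignType :=
  fun i ↦ SignType.sign (φ i x)

noncomputable def chamberSigns (φ : ι → Dual 𝕜 V) : Set (ι → SignType) :=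
  signVector φ '' {x | ∀ i, φ i x ≠ 0}

theorem convex_signVector_preimage_singleton [IsStrictOrderedRing 𝕜] (φ : ι → Dual 𝕜 V)
    (σ : ι → SignType) :
    Convex 𝕜 (signVector φ ⁻¹' {σ}) := by
  intro x hx y hy a b ha hb hab
  funext i
  have hyx : SignType.sign (φ i y) = SignType.sign (φ i x) :=
    (congrFun hy i).trans (congrFun hx i).symm
  simp only [signVector, map_add, map_smul, smul_eq_mul]
  rw [sign_mul_add_mul_of_sign_eq ha hb (hab ▸ one_pos) hyx.symm]
  exact congrFun hx i

theorem chamberSigns_eq_empty_of_eq_zero {φ : ι → Dual 𝕜 V} {i : ι} (hi : φ i = 0) :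
    chamberSigns φ = ∅ :=
  Set.image_eq_empty.2 <| Set.eq_empty_of_forall_notMem fun x hx ↦ hx i (by simp [hi])

theorem image_init_chamberSigns_subset {n : ℕ} (φ : Fin (n + 1) → Dual 𝕜 V) :
    Fin.init '' chamberSigns φ ⊆ chamberSigns (Fin.init φ) := by
  rintro _ ⟨_, ⟨x, hx, rfl⟩, rfl⟩
  exact ⟨x, fun i ↦ hx _, rfl⟩

/-- If `x` and `y` realise `τ` extended by `+1` and by `-1`, then `L x • y - L y • x` lies on the
last hyperplane `ker L` and, being a positive combination of `x` and `y`, still realises `τ`. -/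
theorem snoc_preimage_chamberSigns_inter_subset [IsStrictOrderedRing 𝕜] {n : ℕ}
    (φ : Fin (n + 1) → Dual 𝕜 V) :
    (fun τ ↦ Fin.snoc τ 1) ⁻¹' chamberSigns φ ∩ (fun τ ↦ Fin.snoc τ (-1)) ⁻¹' chamberSigns φ ⊆
      chamberSigns fun i ↦ (Fin.init φ i).domRestrict (LinearMap.ker (φ (Fin.last n))) := by
  rintro τ ⟨⟨x, -, hx⟩, ⟨y, hy0, hy⟩⟩
  set L := φ (Fin.last n)
  have hLx : 0 < L x := sign_eq_one_iff.1 (by simpa [signVector] using congrFun hx (Fin.last n))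
  have hLy : L y < 0 :=
    sign_eq_neg_one_iff.1 (by simpa [signVector] using congrFun hy (Fin.last n))
  have hxi (i : Fin n) : SignType.sign (φ i.castSucc x) = τ i := by
    simpa [signVector] using congrFun hx i.castSucc
  have hyi (i : Fin n) : SignType.sign (φ i.castSucc y) = τ i := by
    simpa [signVector] using congrFun hy i.castSucc
  have hz : L x • y - L y • x ∈ LinearMap.ker L := by
    simp only [LinearMap.mem_ker, map_sub, map_smul, smul_eq_mul]
    ring
  have hsign (i : Fin n) : SignType.sign (φ i.castSucc (L x • y - L y • x)) = τ i := by
    rw [sub_eq_add_neg, ← neg_smul, map_add, map_smul, map_smul, smul_eq_mul, smul_eq_mul,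
      ← hyi]
    exact sign_mul_add_mul_of_sign_eq hLx.le (by linarith) (by linarith)
      ((hyi i).trans (hxi i).symm)
  refine ⟨⟨_, hz⟩, fun i ↦ ?_, funext hsign⟩
  rw [LinearMap.domRestrict_apply, ← sign_ne_zero, Fin.init, hsign, ← hyi, sign_ne_zero]
  exact hy0 i.castSucc

theorem ncard_chamberSigns_le_add [IsStrictOrderedRing 𝕜] {n : ℕ}
    (φ : Fin (n + 1) → Dual 𝕜 V) :
    (chamberSigns φ).ncard ≤ (chamberSigns (Fin.init φ)).ncard +
      (chamberSigns fun i ↦ (Fin.init φ i).domRestrict (LinearMap.ker (φ (Fin.last n)))).ncard := by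
  have hlast : ∀ σ ∈ chamberSigns φ, σ (Fin.last n) = 1 ∨ σ (Fin.last n) = -1 := by
    rintro _ ⟨x, hx, rfl⟩
    rcases (hx (Fin.last n)).lt_or_gt with h | h
    · exact .inr (sign_neg h)
    · exact .inl (sign_pos h)
  calc _ ≤ _ := Set.ncard_le_ncard_image_init_add _ hlast
    _ ≤ _ := add_le_add (Set.ncard_le_ncard (image_init_chamberSigns_subset φ))
        (Set.ncard_le_ncard (snoc_preimage_chamberSigns_inter_subset φ))

theorem ncard_chamberSigns_le [IsStrictOrderedRing 𝕜] [FiniteDimensional 𝕜 V] (n : ℕ)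
    (φ : Fin (n + 1) → Dual 𝕜 V) :
    (chamberSigns φ).ncard ≤ 2 * ∑ j ∈ range (finrank 𝕜 V), n.choose j := by
  induction n generalizing V with
  | zero =>
    by_cases hL : φ (Fin.last 0) = 0
    · simp [chamberSigns_eq_empty_of_eq_zero hL]
    rw [← Module.Dual.finrank_ker_add_one_of_ne_zero hL]
    calc _ ≤ _ := ncard_chamberSigns_le_add φ
      _ ≤ 1 + 1 := add_le_add (Set.ncard_le_one_of_subsingleton _)
          (Set.ncard_le_one_of_subsingleton _)
      _ = _ := by simp [sum_range_succ']
  | succ n ih =>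
    by_cases hL : φ (Fin.last (n + 1)) = 0
    · simp [chamberSigns_eq_empty_of_eq_zero hL]
    calc _ ≤ _ := ncard_chamberSigns_le_add φ
      _ ≤ _ := add_le_add (ih _) (ih _)
      _ = _ := by
        rw [← Module.Dual.finrank_ker_add_one_of_ne_zero hL, Nat.sum_range_succ_choose_succ]
        ring

end Arrangement

theorem card_connectedComponents_le_ncard_chamberSigns {V ι : Type*} [Finite ι] [AddCommGroup V]
    [Module ℝ V] [TopologicalSpace V] [ContinuousAdd V] [ContinuousSMul ℝ V] (φ : ι → Dual ℝ V) :
    Nat.card (ConnectedComponents {x | ∀ i, φ i x ≠ 0}) ≤ (chamberSigns φ).ncard := by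
  set U := {x | ∀ i, φ i x ≠ 0}
  set g : U → ι → SignType := fun x ↦ signVector φ x
  have hcell (x y : U) (hxy : g x = g y) : (x : ConnectedComponents U) = y := by
    have hsub : signVector φ ⁻¹' {g x} ⊆ U := fun z hz i ↦ by
      rw [← sign_ne_zero]
      exact (congrFun hz i).trans_ne (sign_ne_zero.2 (x.2 i))
    have hpre : IsPreconnected (((↑) : U → V) ⁻¹' (signVector φ ⁻¹' {g x})) := by
      rw [← Topology.IsInducing.subtypeVal.isPreconnected_image, Subtype.image_preimage_coe,
        Set.inter_eq_right.2 hsub]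
      exact (convex_signVector_preimage_singleton φ _).isPreconnected
    exact (ConnectedComponents.coe_eq_coe'.2
      (hpre.subset_connectedComponent rfl hxy.symm)).symm
  rw [chamberSigns, Set.image_eq_range, ← Nat.card_coe_set_eq]
  change _ ≤ Nat.card (Set.range g)
  refine Nat.card_le_card_of_surjective (fun σ ↦ ConnectedComponents.mk (Set.rangeSplitting g σ))
    fun c ↦ ?_
  obtain ⟨x, rfl⟩ := ConnectedComponents.surjective_coe c
  exact ⟨⟨g x, x, rfl⟩, hcell _ _ (Set.apply_rangeSplitting g _)⟩

theorem central_arrangement_region_bound_general (m n : ℕ) (hm : 1 ≤ m) (hnm : m ≤ n)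
    (a : Fin n → (Fin m → ℝ)) :
    Nat.card (ConnectedComponents {x : Fin m → ℝ | ∀ i, a i ⬝ᵥ x ≠ 0}) ≤
      2 * ∑ j ∈ Finset.range m, (n - 1).choose j := by
  obtain ⟨n, rfl⟩ : ∃ k, n = k + 1 := ⟨n - 1, by omega⟩
  calc _ ≤ (chamberSigns fun i ↦ dotProductEquiv ℝ (Fin m) (a i)).ncard :=
        card_connectedComponents_le_ncard_chamberSigns _
    _ ≤ _ := (ncard_chamberSigns_le n _).trans_eq (by simp)

/-- An arrangement of `n` hyperplanes through the origin in `ℝ^m` (`n ≥ m ≥ 1`,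
hyperplanes in general position: every `m` of the normal vectors are linearly
independent) partitions `ℝ^m` minus their union into at most
`2 · ∑_{j=0}^{m-1} C(n-1, j)` regions. -/
theorem central_arrangement_region_bound (m n : ℕ) (hm : 1 ≤ m) (hnm : m ≤ n)
    (a : Fin n → (Fin m → ℝ)) (ha : ∀ i, a i ≠ 0)
    (hgen : ∀ s : Finset (Fin n), s.card = m →
      LinearIndependent ℝ (fun i : s => a i)) :
    Nat.card (ConnectedComponents {x : Fin m → ℝ | ∀ i, a i ⬝ᵥ x ≠ 0}) ≤
      2 * ∑ j ∈ Finset.range m, (n - 1).choose j :=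
  central_arrangement_region_bound_general m n hm hnm a
end

section
/- Let s, s' ∈ {0,1}^N be activation states of two analytic cells sharing a common boundary facet contained in the hyperplane {x : a_{lk}^r · x = 0} of the k-th neuron at layer l, where this neuron's hyperplane is the unique arrangement hyperplane containing the facet. Then s and s' differ exactly in the (l,k) coordinate. -/
open Matrix

noncomputable def relu (t : ℝ) : ℝ := max t 0

noncomputable def mlp (d : ℕ → ℕ)
    (W : ∀ l : ℕ, Matrix (Fin (d (l + 1))) (Fin (d l)) ℝ) :
    (L : ℕ) → (Fin (d 0) → ℝ) → Fin (d L) → ℝ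
  | 0, x => x
  | L + 1, x => fun k => relu ((W L).mulVec (mlp d W L x) k)

/-- Masked (region-wise) linear forward pass: rows of inactive neurons are zeroed. -/
noncomputable def mlpLin (d : ℕ → ℕ)
    (W : ∀ l : ℕ, Matrix (Fin (d (l + 1))) (Fin (d l)) ℝ)
    (s : ∀ l : ℕ, Fin (d (l + 1)) → Bool) :
    (L : ℕ) → (Fin (d 0) → ℝ) → Fin (d L) → ℝ
  | 0, x => x
  | L + 1, x => fun k => if s L k then (W L).mulVec (mlpLin d W s L x) k else 0

/-- Extend a state vector over the `L` hidden layers to all layer indices. -/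
def extState (L : ℕ) (d : ℕ → ℕ) (s : ∀ l : Fin L, Fin (d (l.1 + 1)) → Bool) :
    ∀ l : ℕ, Fin (d (l + 1)) → Bool :=
  fun l => if h : l < L then s ⟨l, h⟩ else fun _ => false

/-- The linear functional `a_{lk}^r` of neuron `k` at hidden layer `l+1` under state `s`. -/
noncomputable def neuronFun (L : ℕ) (d : ℕ → ℕ)
    (W : ∀ l : ℕ, Matrix (Fin (d (l + 1))) (Fin (d l)) ℝ)
    (s : ∀ l : Fin L, Fin (d (l.1 + 1)) → Bool)
    (l : Fin L) (k : Fin (d (l.1 + 1))) (x : Fin (d 0) → ℝ) : ℝ :=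
  (W l.1).mulVec (mlpLin d W (extState L d s) l.1 x) k

/-- The analytic cell of the state `s`: the polyhedral set
`{x : (I − 2 diag(s)) A^r x ≤ 0}` where each neuron's linear functional has the sign
prescribed by its state bit. -/
noncomputable def analyticCell (L : ℕ) (d : ℕ → ℕ)
    (W : ∀ l : ℕ, Matrix (Fin (d (l + 1))) (Fin (d l)) ℝ)
    (s : ∀ l : Fin L, Fin (d (l.1 + 1)) → Bool) : Set (Fin (d 0) → ℝ) :=
  {x | ∀ (l : Fin L) (k : Fin (d (l.1 + 1))),
    (s l k = true → 0 ≤ neuronFun L d W s l k x) ∧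
    (s l k = false → neuronFun L d W s l k x ≤ 0)}

/-!
On its own cell the state bits are exactly the signs of the pre-activations, so there the masked
forward pass agrees with the ReLU network and every neuron functional is the same real number for
both states at a common point. At a point of the facet off the hyperplane of a neuron this number
is nonzero, and its sign fixes that neuron's bit in both states. Hence only the crossed neuron can
differ, and it must, since `s ≠ s'`.
-/

theorem Bool.eq_decide_pos_of_sign {α : Type*} [LinearOrder α] [Zero α] {b : Bool} {t : α}
    (ht : t ≠ 0) (hpos : b = true → 0 ≤ t) (hneg : b = false → t ≤ 0) : b = decide (0 < t) := by
  cases b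
  · simpa using hneg rfl
  · simpa using lt_of_le_of_ne (hpos rfl) ht.symm

theorem Function.apply₂_ne_of_ne_of_eq_off {α : Type*} {β : α → Type*} {γ : Type*}
    {f g : (a : α) → β a → γ} (hfg : f ≠ g) {a₀ : α} {b₀ : β a₀}
    (hoff : ∀ p : Σ a, β a, p ≠ ⟨a₀, b₀⟩ → f p.1 p.2 = g p.1 p.2) : f a₀ b₀ ≠ g a₀ b₀ := by
  intro h₀
  refine hfg (funext fun a => funext fun b => ?_)
  by_cases hp : (⟨a, b⟩ : Σ a, β a) = ⟨a₀, b₀⟩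
  · obtain ⟨rfl, hb⟩ := Sigma.mk.inj_iff.mp hp
    exact (eq_of_heq hb) ▸ h₀
  · exact hoff ⟨a, b⟩ hp

section analyticCell

variable {L : ℕ} {d : ℕ → ℕ} {W : ∀ l : ℕ, Matrix (Fin (d (l + 1))) (Fin (d l)) ℝ}
  {s s' : ∀ l : Fin L, Fin (d (l.1 + 1)) → Bool} {x : Fin (d 0) → ℝ}

theorem mlpLin_extState_eq_mlp (hx : x ∈ analyticCell L d W s) :
    ∀ m ≤ L, mlpLin d W (extState L d s) m x = mlp d W m x
  | 0, _ => rfl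
  | m + 1, hm => by
    have hmL : m < L := hm
    funext k
    have hsign := hx ⟨m, hmL⟩ k
    simp only [neuronFun, mlpLin_extState_eq_mlp hx m hmL.le] at hsign
    simp only [mlpLin, mlp, mlpLin_extState_eq_mlp hx m hmL.le, extState, dif_pos hmL, relu]
    cases hb : s ⟨m, hmL⟩ k
    · simp [max_eq_right (hsign.2 hb)]
    · simp [max_eq_left (hsign.1 hb)]

theorem neuronFun_eq_of_mem_analyticCell (hx : x ∈ analyticCell L d W s)
    (l : Fin L) (k : Fin (d (l.1 + 1))) :
    neuronFun L d W s l k x = (W l.1).mulVec (mlp d W l.1 x) k := by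
  rw [neuronFun, mlpLin_extState_eq_mlp hx l.1 l.2.le]

theorem eq_decide_pos_neuronFun_of_mem_analyticCell (hx : x ∈ analyticCell L d W s)
    (l : Fin L) (k : Fin (d (l.1 + 1))) (hne : neuronFun L d W s l k x ≠ 0) :
    s l k = decide (0 < (W l.1).mulVec (mlp d W l.1 x) k) := by
  have hsign := hx l k
  rw [neuronFun_eq_of_mem_analyticCell hx] at hne hsign
  exact Bool.eq_decide_pos_of_sign hne hsign.1 hsign.2

theorem apply_eq_of_mem_analyticCell_of_neuronFun_ne_zero (hx : x ∈ analyticCell L d W s)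
    (hx' : x ∈ analyticCell L d W s') (l : Fin L) (k : Fin (d (l.1 + 1)))
    (hne : neuronFun L d W s l k x ≠ 0) : s l k = s' l k := by
  have hne' : neuronFun L d W s' l k x ≠ 0 := by
    rwa [neuronFun_eq_of_mem_analyticCell hx, ← neuronFun_eq_of_mem_analyticCell hx'] at hne
  rw [eq_decide_pos_neuronFun_of_mem_analyticCell hx l k hne,
    eq_decide_pos_neuronFun_of_mem_analyticCell hx' l k hne']

end analyticCell

theorem adjacent_cells_states_differ_in_one_neuron_general (L : ℕ) (d : ℕ → ℕ)
    (W : ∀ l : ℕ, Matrix (Fin (d (l + 1))) (Fin (d l)) ℝ)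
    (s s' : ∀ l : Fin L, Fin (d (l.1 + 1)) → Bool) (hss : s ≠ s')
    (l0 : Fin L) (k0 : Fin (d (l0.1 + 1)))
    (Fset : Set (Fin (d 0) → ℝ))
    (hsubs : Fset ⊆ analyticCell L d W s) (hsubs' : Fset ⊆ analyticCell L d W s')
    (honly : ∀ p : Σ l : Fin L, Fin (d (l.1 + 1)),
      p ≠ ⟨l0, k0⟩ → ¬ Fset ⊆ {x | neuronFun L d W s p.1 p.2 x = 0}) :
    (∀ p : Σ l : Fin L, Fin (d (l.1 + 1)),
      p ≠ ⟨l0, k0⟩ → s p.1 p.2 = s' p.1 p.2) ∧ s l0 k0 ≠ s' l0 k0 := by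
  have hagree : ∀ p : Σ l : Fin L, Fin (d (l.1 + 1)),
      p ≠ ⟨l0, k0⟩ → s p.1 p.2 = s' p.1 p.2 := by
    intro p hp
    obtain ⟨x, hxF, hxne⟩ := Set.not_subset.mp (honly p hp)
    exact apply_eq_of_mem_analyticCell_of_neuronFun_ne_zero (hsubs hxF) (hsubs' hxF) p.1 p.2 hxne
  exact ⟨hagree, Function.apply₂_ne_of_ne_of_eq_off hss hagree⟩

/-- **State transition across a cell boundary (step 4 of analytic marching).**
If the states `s` and `s'` of two analytic cells share a common boundary facet
`Fset` that is nonempty, relatively open in the hyperplane of neuron `(l0, k0)`,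
contained in that neuron's hyperplane, and contained in no other neuron's
hyperplane, then `s` and `s'` differ exactly in the `(l0, k0)` coordinate. -/
theorem adjacent_cells_states_differ_in_one_neuron (L : ℕ) (d : ℕ → ℕ)
    (W : ∀ l : ℕ, Matrix (Fin (d (l + 1))) (Fin (d l)) ℝ)
    (s s' : ∀ l : Fin L, Fin (d (l.1 + 1)) → Bool) (hss : s ≠ s')
    (l0 : Fin L) (k0 : Fin (d (l0.1 + 1)))
    (Fset : Set (Fin (d 0) → ℝ)) (hne : Fset.Nonempty)
    (hsubs : Fset ⊆ analyticCell L d W s) (hsubs' : Fset ⊆ analyticCell L d W s')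
    (hplane : Fset ⊆ {x | neuronFun L d W s l0 k0 x = 0})
    (hrelopen : ∀ x ∈ Fset, Fset ∈ nhdsWithin x {y | neuronFun L d W s l0 k0 y = 0})
    (honly : ∀ p : Σ l : Fin L, Fin (d (l.1 + 1)),
      p ≠ ⟨l0, k0⟩ → ¬ Fset ⊆ {x | neuronFun L d W s p.1 p.2 x = 0}) :
    (∀ p : Σ l : Fin L, Fin (d (l.1 + 1)),
      p ≠ ⟨l0, k0⟩ → s p.1 p.2 = s' p.1 p.2) ∧ s l0 k0 ≠ s' l0 k0 :=
  adjacent_cells_states_differ_in_one_neuron_general L d W s s' hss l0 k0 Fset hsubs hsubs' honly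
end
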